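/- Let m_1 > m_2 > 0, Ω_1, Ω_2 > 0, m_0 > 0, Ω_0 > 0, and let N ≥ 1. Let X_0, X_{1,1}, …, X_{1,N}, X_{2,1}, …, X_{2,N} be mutually independent random variables, where X_0 is Nakagami with shape m_0 and scale Ω_0, each X_{1,n} is Nakagami with shape m_1 and scale Ω_1, and each X_{2,n} is Nakagami with shape m_2 and scale Ω_2; set H = Σ_{n=1}^N X_{1,n} X_{2,n} and C = 2 (Γ(2m_2)/Γ(m_2)) (Γ(m_1 − m_2)/Γ(m_1)) (Ω_1 Ω_2)^{m_2}. Then for every s > 0, E[exp(−s (X_0 + H))] ≤ 2 (Γ(2m_0)/Γ(m_0)) Ω_0^{m_0} · C^N · s^{−2(m_0 + N m_2)}. (Upper bound on the MGF of the end-to-end channel amplitude of an IRS-assisted system with a direct link; equation (26) of the paper.) -/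

import Mathlib

open MeasureTheory ProbabilityTheory Real

/-- The density of a Nakagami-`m` random variable with shape `m` and scale `Ω`:
`f_{m,Ω}(x) = (2 Ω^m / Γ(m)) x^(2m-1) exp(-Ω x²)` for `x > 0`, and `0` otherwise. -/
noncomputable def nakagamiPDF (m Ω x : ℝ) : ℝ :=
  if 0 < x then 2 * Ω ^ m / Real.Gamma m * x ^ (2 * m - 1) * Real.exp (-Ω * x ^ 2) else 0

/-- `X` is a Nakagami-`m` random variable (shape `m`, scale `Ω`) on `(E, P)`:
its law has density `nakagamiPDF m Ω` with respect to Lebesgue measure. -/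
def IsNakagami {E : Type*} [MeasurableSpace E] (P : MeasureTheory.Measure E)
    (X : E → ℝ) (m Ω : ℝ) : Prop :=
  MeasureTheory.Measure.map X P =
    MeasureTheory.volume.withDensity (fun x => ENNReal.ofReal (nakagamiPDF m Ω x))

/-!
By independence, `E[exp(-s (X₀ + H))]` factors as `E[exp(-s X₀)]` times the `N` factors
`E[exp(-s X₁ₙ X₂ₙ)]`. Bounding `exp(-Ω x²) ≤ 1` in the Nakagami density leaves a Gamma integral,
so `E[exp(-t X)] ≤ 2 (Γ(2m)/Γ(m)) Ω^m t^(-2m)` for `X` Nakagami-`m`. For a product `X₁ X₂`,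
apply this bound conditionally on `X₁`, with `t = s X₁`; what remains is the negative moment
`E[X₁^(-2m₂)] = Γ(m₁ - m₂) Ω₁^m₂ / Γ(m₁)`, finite exactly because `m₂ < m₁`.
-/

open Set Measure
open scoped ENNReal

/-- `IsNakagami P X m Ω` unfolds to `P.map X = nakagamiMeasure m Ω`. -/
noncomputable def nakagamiMeasure (m Ω : ℝ) : Measure ℝ :=
  volume.withDensity fun x ↦ ENNReal.ofReal (nakagamiPDF m Ω x)

lemma measurable_nakagamiPDF (m Ω : ℝ) : Measurable (nakagamiPDF m Ω) :=
  Measurable.ite measurableSet_Ioi (by fun_prop) measurable_const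

lemma lintegral_nakagamiMeasure {m Ω : ℝ} {g : ℝ → ℝ≥0∞} (hg : Measurable g) :
    ∫⁻ x, g x ∂nakagamiMeasure m Ω =
      ∫⁻ x in Ioi 0, ENNReal.ofReal (2 * Ω ^ m / Gamma m * x ^ (2 * m - 1) * exp (-Ω * x ^ 2))
        * g x := by
  rw [nakagamiMeasure, lintegral_withDensity_eq_lintegral_mul _
    (measurable_nakagamiPDF m Ω).ennreal_ofReal hg, ← lintegral_indicator measurableSet_Ioi]
  congr 1 with x
  by_cases hx : 0 < x <;> simp [nakagamiPDF, hx]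

lemma nakagamiMeasure_ae_pos (m Ω : ℝ) : ∀ᵐ x ∂nakagamiMeasure m Ω, 0 < x := by
  rw [nakagamiMeasure, ae_withDensity_iff (measurable_nakagamiPDF m Ω).ennreal_ofReal]
  refine ae_of_all _ fun x hx ↦ ?_
  by_contra h
  simp [nakagamiPDF, h] at hx

lemma lintegral_exp_neg_mul_nakagamiMeasure_le {m Ω t : ℝ} (hm : 0 < m) (hΩ : 0 ≤ Ω)
    (ht : 0 < t) :
    ∫⁻ x, ENNReal.ofReal (exp (-(t * x))) ∂nakagamiMeasure m Ω ≤
      ENNReal.ofReal (2 * Gamma (2 * m) / Gamma m * Ω ^ m * t ^ (-(2 * m))) := by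
  have hint : IntegrableOn (fun x : ℝ ↦ x ^ (2 * m - 1) * exp (-(t * x))) (Ioi 0) := by
    simpa [rpow_one] using integrableOn_rpow_mul_exp_neg_mul_rpow (p := 1) (s := 2 * m - 1)
      (by linarith) zero_lt_one ht
  have hval : ∫ x in Ioi (0 : ℝ), x ^ (2 * m - 1) * exp (-(t * x)) =
      (1 / t) ^ (2 * m) * Gamma (2 * m) := by
    simpa using integral_rpow_mul_exp_neg_mul_Ioi (a := 2 * m) (by linarith) ht
  calc ∫⁻ x, ENNReal.ofReal (exp (-(t * x))) ∂nakagamiMeasure m Ω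
      = ∫⁻ x in Ioi 0, ENNReal.ofReal (2 * Ω ^ m / Gamma m * x ^ (2 * m - 1) * exp (-Ω * x ^ 2)
          * exp (-(t * x))) := by
        rw [lintegral_nakagamiMeasure (by fun_prop)]
        refine setLIntegral_congr_fun measurableSet_Ioi fun x (hx : 0 < x) ↦ ?_
        rw [← ENNReal.ofReal_mul (by positivity)]
    _ ≤ ∫⁻ x in Ioi 0,
          ENNReal.ofReal (2 * Ω ^ m / Gamma m * (x ^ (2 * m - 1) * exp (-(t * x)))) := by
        refine setLIntegral_mono' measurableSet_Ioi fun x (hx : 0 < x) ↦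
          ENNReal.ofReal_le_ofReal ?_
        calc 2 * Ω ^ m / Gamma m * x ^ (2 * m - 1) * exp (-Ω * x ^ 2) * exp (-(t * x))
            = 2 * Ω ^ m / Gamma m * (x ^ (2 * m - 1) * exp (-(t * x))) * exp (-Ω * x ^ 2) := by
              ring
          _ ≤ 2 * Ω ^ m / Gamma m * (x ^ (2 * m - 1) * exp (-(t * x))) :=
              mul_le_of_le_one_right (by positivity)
                (exp_le_one_iff.mpr (by nlinarith [sq_nonneg x]))
    _ = ENNReal.ofReal (2 * Ω ^ m / Gamma m * ((1 / t) ^ (2 * m) * Gamma (2 * m))) := by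
        rw [← ofReal_integral_eq_lintegral_ofReal (hint.const_mul _), integral_const_mul, hval]
        filter_upwards [ae_restrict_mem measurableSet_Ioi] with x (hx : 0 < x)
        positivity
    _ = _ := by
        rw [one_div, inv_rpow ht.le, ← rpow_neg ht.le]
        ring_nf

lemma lintegral_rpow_nakagamiMeasure {m Ω q : ℝ} (hm : 0 < m) (hΩ : 0 < Ω) (hq : -m < q) :
    ∫⁻ x, ENNReal.ofReal (x ^ (2 * q)) ∂nakagamiMeasure m Ω =
      ENNReal.ofReal (Gamma (m + q) / Gamma m * Ω ^ (-q)) := by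
  have hint : IntegrableOn (fun x : ℝ ↦ x ^ (2 * (m + q) - 1) * exp (-Ω * x ^ (2 : ℝ))) (Ioi 0) :=
    integrableOn_rpow_mul_exp_neg_mul_rpow (by linarith) two_pos hΩ
  have hval : ∫ x in Ioi (0 : ℝ), x ^ (2 * (m + q) - 1) * exp (-Ω * x ^ (2 : ℝ)) =
      Ω ^ (-(m + q)) * (1 / 2) * Gamma (m + q) := by
    rw [integral_rpow_mul_exp_neg_mul_rpow two_pos (by linarith) hΩ]
    ring_nf
  calc ∫⁻ x, ENNReal.ofReal (x ^ (2 * q)) ∂nakagamiMeasure m Ω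
      = ∫⁻ x in Ioi 0, ENNReal.ofReal
          (2 * Ω ^ m / Gamma m * (x ^ (2 * (m + q) - 1) * exp (-Ω * x ^ (2 : ℝ)))) := by
        rw [lintegral_nakagamiMeasure (by fun_prop)]
        refine setLIntegral_congr_fun measurableSet_Ioi fun x (hx : 0 < x) ↦ ?_
        rw [← ENNReal.ofReal_mul (by positivity), rpow_two,
          show 2 * (m + q) - 1 = (2 * m - 1) + 2 * q by ring, rpow_add hx]
        ring_nf
    _ = ENNReal.ofReal (2 * Ω ^ m / Gamma m * (Ω ^ (-(m + q)) * (1 / 2) * Gamma (m + q))) := by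
        rw [← ofReal_integral_eq_lintegral_ofReal (hint.const_mul _), integral_const_mul, hval]
        filter_upwards [ae_restrict_mem measurableSet_Ioi] with x (hx : 0 < x)
        positivity
    _ = _ := by
        rw [show Ω ^ (-q) = Ω ^ m * Ω ^ (-(m + q)) by rw [← rpow_add hΩ]; ring_nf]
        ring_nf

lemma lintegral_lintegral_exp_neg_mul_mul_nakagamiMeasure_le {m₁ m₂ Ω₁ Ω₂ s : ℝ} (hm₂ : 0 < m₂)
    (hm₁₂ : m₂ < m₁) (hΩ₁ : 0 < Ω₁) (hΩ₂ : 0 ≤ Ω₂) (hs : 0 < s) :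
    ∫⁻ x, ∫⁻ y, ENNReal.ofReal (exp (-(s * (x * y)))) ∂nakagamiMeasure m₂ Ω₂
        ∂nakagamiMeasure m₁ Ω₁ ≤
      ENNReal.ofReal (2 * (Gamma (2 * m₂) / Gamma m₂) * (Gamma (m₁ - m₂) / Gamma m₁) *
        (Ω₁ * Ω₂) ^ m₂ * s ^ (-(2 * m₂))) := by
  have hK : 0 ≤ 2 * Gamma (2 * m₂) / Gamma m₂ * Ω₂ ^ m₂ * s ^ (-(2 * m₂)) := by positivity
  calc ∫⁻ x, ∫⁻ y, ENNReal.ofReal (exp (-(s * (x * y)))) ∂nakagamiMeasure m₂ Ω₂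
        ∂nakagamiMeasure m₁ Ω₁
      ≤ ∫⁻ x, ENNReal.ofReal (2 * Gamma (2 * m₂) / Gamma m₂ * Ω₂ ^ m₂ * s ^ (-(2 * m₂))) *
          ENNReal.ofReal (x ^ (2 * -m₂)) ∂nakagamiMeasure m₁ Ω₁ := by
        refine lintegral_mono_ae ?_
        filter_upwards [nakagamiMeasure_ae_pos m₁ Ω₁] with x hx
        simp_rw [← mul_assoc s x]
        refine (lintegral_exp_neg_mul_nakagamiMeasure_le hm₂ hΩ₂ (mul_pos hs hx)).trans_eq ?_
        rw [← ENNReal.ofReal_mul hK, mul_rpow hs.le hx.le]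
        ring_nf
    _ = ENNReal.ofReal (2 * Gamma (2 * m₂) / Gamma m₂ * Ω₂ ^ m₂ * s ^ (-(2 * m₂))) *
          ENNReal.ofReal (Gamma (m₁ + -m₂) / Gamma m₁ * Ω₁ ^ (-(-m₂))) := by
        rw [lintegral_const_mul _ (by fun_prop),
          lintegral_rpow_nakagamiMeasure (hm₂.trans hm₁₂) hΩ₁ (neg_lt_neg hm₁₂)]
    _ = _ := by
        rw [← ENNReal.ofReal_mul hK, mul_rpow hΩ₁.le hΩ₂, neg_neg, ← sub_eq_add_neg]
        ring_nf

namespace ProbabilityTheory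

lemma iIndepFun.curry {Ω ι : Type*} {mΩ : MeasurableSpace Ω} {P : Measure Ω}
    {κ : ι → Type*} {𝓧 : (i : ι) → κ i → Type*} {m𝓧 : ∀ i j, MeasurableSpace (𝓧 i j)}
    {X : (i : ι) → (j : κ i) → Ω → 𝓧 i j} (mX : ∀ i j, Measurable (X i j))
    (h : iIndepFun (fun (p : (i : ι) × κ i) ω ↦ X p.1 p.2 ω) P) :
    iIndepFun (fun i ω ↦ (X i · ω)) P := by
  have := h.isProbabilityMeasure
  have : ∀ i j, IsProbabilityMeasure (P.map (X i j)) :=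
    fun i j ↦ isProbabilityMeasure_map (mX i j).aemeasurable
  have : ∀ i, IsProbabilityMeasure (P.map (fun ω ↦ (X i · ω))) :=
    fun i ↦ isProbabilityMeasure_map (Measurable.aemeasurable (by fun_prop))
  have hblock (i : ι) : P.map (fun ω j ↦ X i j ω) = infinitePi (fun j ↦ P.map (X i j)) :=
    (h.precomp sigma_mk_injective).map_fun_eq_infinitePi_map (mX i)
  rw [iIndepFun_iff_map_fun_eq_infinitePi_map (by fun_prop), funext hblock,
    ← infinitePi_map_piCurry, ← h.map_fun_eq_infinitePi_map (fun p ↦ mX p.1 p.2),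
    map_map (by fun_prop) (by fun_prop)]
  rfl

/-- Regroups `Option (ι ⊕ ι)` into the block `{none}` and the blocks
`{some (inl n), some (inr n)}`. -/
def optionSumBlock {ι : Type*} : (o : Option ι) × (o.elim Unit fun _ ↦ Bool) → Option (ι ⊕ ι)
  | ⟨none, _⟩ => none
  | ⟨some n, b⟩ => some (bif b then .inr n else .inl n)

lemma optionSumBlock_injective {ι : Type*} : (optionSumBlock (ι := ι)).Injective := by
  rintro ⟨_ | n, b⟩ ⟨_ | n', b'⟩ h
  · rfl
  all_goals cases b <;> cases b' <;> simp [optionSumBlock] at h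
  all_goals rw [h]

lemma iIndepFun.lintegral_mul_prod_pairs {Ω ι β : Type*} [Fintype ι] {mΩ : MeasurableSpace Ω}
    {P : Measure Ω} [MeasurableSpace β] {X₀ : Ω → β} {X₁ X₂ : ι → Ω → β}
    (hX₀ : Measurable X₀) (hX₁ : ∀ n, Measurable (X₁ n)) (hX₂ : ∀ n, Measurable (X₂ n))
    (hIndep : iIndepFun (fun o : Option (ι ⊕ ι) ↦ o.elim X₀ (Sum.elim X₁ X₂)) P)
    {φ : β → ℝ≥0∞} {ψ : ι → β → β → ℝ≥0∞} (hφ : Measurable φ)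
    (hψ : ∀ n, Measurable (Function.uncurry (ψ n))) :
    ∫⁻ ω, φ (X₀ ω) * ∏ n, ψ n (X₁ n ω) (X₂ n ω) ∂P
      = (∫⁻ ω, φ (X₀ ω) ∂P) * ∏ n, ∫⁻ ω, ψ n (X₁ n ω) (X₂ n ω) ∂P := by
  have hf : ∀ o : Option (ι ⊕ ι), Measurable (o.elim X₀ (Sum.elim X₁ X₂)) := by
    rintro (_ | n | n)
    exacts [hX₀, hX₁ n, hX₂ n]
  let B (o : Option ι) (ω : Ω) (j : o.elim Unit fun _ ↦ Bool) : β :=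
    (optionSumBlock ⟨o, j⟩).elim X₀ (Sum.elim X₁ X₂) ω
  have hB : iIndepFun B P :=
    (hIndep.precomp optionSumBlock_injective).curry (fun o j ↦ hf _)
  let g : (o : Option ι) → ((o.elim Unit fun _ ↦ Bool) → β) → ℝ≥0∞
    | none => fun v ↦ φ (v ())
    | some n => fun v ↦ ψ n (v false) (v true)
  have hg : ∀ o, Measurable (g o) := by
    rintro (_ | n)
    · exact hφ.comp (measurable_pi_apply _)
    · exact (hψ n).comp (f := fun v : Bool → β ↦ (v false, v true)) (by fun_prop)
  have := lintegral_prod_eq_prod_lintegral_of_indepFun Finset.univ _ (hB.comp g hg)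
    (fun o ↦ (hg o).comp (measurable_pi_lambda _ fun j ↦ hf _))
  simp only [Fintype.prod_option] at this
  exact this

lemma IndepFun.lintegral_comp_eq_lintegral_lintegral {Ω β γ : Type*} {mΩ : MeasurableSpace Ω}
    {P : Measure Ω} [IsFiniteMeasure P] [MeasurableSpace β] [MeasurableSpace γ]
    {X : Ω → β} {Y : Ω → γ} (hXY : IndepFun X Y P) (hX : Measurable X) (hY : Measurable Y)
    {F : β → γ → ℝ≥0∞} (hF : Measurable (Function.uncurry F)) :
    ∫⁻ ω, F (X ω) (Y ω) ∂P = ∫⁻ x, ∫⁻ y, F x y ∂P.map Y ∂P.map X := by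
  calc ∫⁻ ω, F (X ω) (Y ω) ∂P = ∫⁻ z, Function.uncurry F z ∂P.map fun ω ↦ (X ω, Y ω) :=
        (lintegral_map hF (hX.prodMk hY)).symm
    _ = ∫⁻ z, Function.uncurry F z ∂(P.map X).prod (P.map Y) := by
        rw [(indepFun_iff_map_prod_eq_prod_map_map hX.aemeasurable hY.aemeasurable).1 hXY]
    _ = _ := lintegral_prod _ hF.aemeasurable

end ProbabilityTheory

section RandomVariables

variable {E : Type*} [MeasurableSpace E] {P : Measure E}

lemma IsNakagami.lintegral_exp_neg_mul_le {X : E → ℝ} {m Ω t : ℝ} (hX : IsNakagami P X m Ω)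
    (hXm : Measurable X) (hm : 0 < m) (hΩ : 0 ≤ Ω) (ht : 0 < t) :
    ∫⁻ ω, ENNReal.ofReal (exp (-(t * X ω))) ∂P ≤
      ENNReal.ofReal (2 * Gamma (2 * m) / Gamma m * Ω ^ m * t ^ (-(2 * m))) := by
  rw [← lintegral_map (f := fun x ↦ ENNReal.ofReal (exp (-(t * x)))) (by fun_prop) hXm, hX]
  exact lintegral_exp_neg_mul_nakagamiMeasure_le hm hΩ ht

lemma IsNakagami.lintegral_exp_neg_mul_mul_le [IsFiniteMeasure P] {X Y : E → ℝ}
    {m₁ m₂ Ω₁ Ω₂ s : ℝ} (hX : IsNakagami P X m₁ Ω₁) (hY : IsNakagami P Y m₂ Ω₂)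
    (hXm : Measurable X) (hYm : Measurable Y) (hXY : IndepFun X Y P) (hm₂ : 0 < m₂)
    (hm₁₂ : m₂ < m₁) (hΩ₁ : 0 < Ω₁) (hΩ₂ : 0 ≤ Ω₂) (hs : 0 < s) :
    ∫⁻ ω, ENNReal.ofReal (exp (-(s * (X ω * Y ω)))) ∂P ≤
      ENNReal.ofReal (2 * (Gamma (2 * m₂) / Gamma m₂) * (Gamma (m₁ - m₂) / Gamma m₁) *
        (Ω₁ * Ω₂) ^ m₂ * s ^ (-(2 * m₂))) := by
  rw [hXY.lintegral_comp_eq_lintegral_lintegral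
    (F := fun x y ↦ ENNReal.ofReal (exp (-(s * (x * y))))) hXm hYm (by fun_prop), hX, hY]
  exact lintegral_lintegral_exp_neg_mul_mul_nakagamiMeasure_le hm₂ hm₁₂ hΩ₁ hΩ₂ hs

end RandomVariables

lemma ofReal_exp_neg_mul_add_sum {ι : Type*} [Fintype ι] (s a : ℝ) (b : ι → ℝ) :
    ENNReal.ofReal (exp (-s * (a + ∑ n, b n))) =
      ENNReal.ofReal (exp (-(s * a))) * ∏ n, ENNReal.ofReal (exp (-(s * b n))) := by
  rw [← ENNReal.ofReal_prod_of_nonneg fun n _ ↦ (exp_pos _).le, ← exp_sum,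
    ← ENNReal.ofReal_mul (exp_pos _).le, ← exp_add, Finset.sum_neg_distrib, ← Finset.mul_sum]
  ring_nf

theorem irs_direct_link_mgf_upper_bound_general
    {E : Type*} [MeasurableSpace E] (P : Measure E) [IsProbabilityMeasure P]
    (m₁ m₂ Ω₁ Ω₂ m₀ Ω₀ : ℝ) (hm₂ : 0 < m₂) (hm₁₂ : m₂ < m₁) (hΩ₁ : 0 < Ω₁) (hΩ₂ : 0 < Ω₂)
    (hm₀ : 0 < m₀) (hΩ₀ : 0 < Ω₀)
    (N : ℕ)
    (X₀ : E → ℝ) (X₁ X₂ : Fin N → E → ℝ)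
    (hX₀ : Measurable X₀)
    (hX₁ : ∀ n, Measurable (X₁ n)) (hX₂ : ∀ n, Measurable (X₂ n))
    (hNak₀ : IsNakagami P X₀ m₀ Ω₀)
    (hNak₁ : ∀ n, IsNakagami P (X₁ n) m₁ Ω₁) (hNak₂ : ∀ n, IsNakagami P (X₂ n) m₂ Ω₂)
    (hIndep : iIndepFun
      (fun o : Option (Fin N ⊕ Fin N) => o.elim X₀ (Sum.elim X₁ X₂)) P)
    (C : ℝ) (hC : C = 2 * (Real.Gamma (2 * m₂) / Real.Gamma m₂) *
      (Real.Gamma (m₁ - m₂) / Real.Gamma m₁) * (Ω₁ * Ω₂) ^ m₂)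
    (s : ℝ) (hs : 0 < s) :
    ∫ ω, Real.exp (-s * (X₀ ω + ∑ n, X₁ n ω * X₂ n ω)) ∂P ≤
      2 * (Real.Gamma (2 * m₀) / Real.Gamma m₀) * Ω₀ ^ m₀ * C ^ N *
        s ^ (-(2 * (m₀ + N * m₂))) := by
  have hC₀ : 0 < C := by
    have := hm₂.trans hm₁₂
    have := Gamma_pos_of_pos (sub_pos.2 hm₁₂)
    rw [hC]
    positivity
  have hreflected (n : Fin N) : ∫⁻ ω, ENNReal.ofReal (exp (-(s * (X₁ n ω * X₂ n ω)))) ∂P ≤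
      ENNReal.ofReal (C * s ^ (-(2 * m₂))) :=
    hC ▸ (hNak₁ n).lintegral_exp_neg_mul_mul_le (hNak₂ n) (hX₁ n) (hX₂ n)
      (hIndep.indepFun (i := some (.inl n)) (j := some (.inr n)) (by simp)) hm₂ hm₁₂ hΩ₁ hΩ₂.le hs
  have hbound : ∫⁻ ω, ENNReal.ofReal (exp (-s * (X₀ ω + ∑ n, X₁ n ω * X₂ n ω))) ∂P ≤
      ENNReal.ofReal (2 * Gamma (2 * m₀) / Gamma m₀ * Ω₀ ^ m₀ * s ^ (-(2 * m₀)) *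
        (C * s ^ (-(2 * m₂))) ^ N) := by
    simp_rw [ofReal_exp_neg_mul_add_sum]
    rw [hIndep.lintegral_mul_prod_pairs hX₀ hX₁ hX₂ (φ := fun x ↦ ENNReal.ofReal (exp (-(s * x))))
      (ψ := fun _ x y ↦ ENNReal.ofReal (exp (-(s * (x * y))))) (by fun_prop) fun n ↦ by fun_prop,
      ENNReal.ofReal_mul (by positivity), ENNReal.ofReal_pow (by positivity)]
    refine (mul_le_mul' (hNak₀.lintegral_exp_neg_mul_le hX₀ hm₀ hΩ₀.le hs)
      (Finset.prod_le_prod' fun n _ ↦ hreflected n)).trans_eq ?_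
    rw [Finset.prod_const, Finset.card_univ, Fintype.card_fin]
  have hs_pow : s ^ (-(2 * m₀)) * (s ^ (-(2 * m₂))) ^ N = s ^ (-(2 * (m₀ + N * m₂))) := by
    rw [← rpow_natCast, ← rpow_mul hs.le, ← rpow_add hs]
    ring_nf
  rw [integral_eq_lintegral_of_nonneg_ae (ae_of_all _ fun ω ↦ (exp_pos _).le) (by fun_prop)]
  refine (ENNReal.toReal_le_of_le_ofReal (by positivity) hbound).trans_eq ?_
  rw [mul_pow, ← hs_pow]
  ring

/-- Equation (26) of the paper: upper bound on the MGF of the end-to-end channel amplitude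
`X₀ + H` of an IRS-assisted system with a direct link, where `H = ∑_n X_{1,n} X_{2,n}` and
`C = 2 (Γ(2m₂)/Γ(m₂)) (Γ(m₁-m₂)/Γ(m₁)) (Ω₁Ω₂)^{m₂}`: for `s > 0`,
`E[exp(-s (X₀ + H))] ≤ 2 (Γ(2m₀)/Γ(m₀)) Ω₀^{m₀} C^N s^{-2(m₀ + N m₂)}`. -/
theorem irs_direct_link_mgf_upper_bound
    {E : Type*} [MeasurableSpace E] (P : Measure E) [IsProbabilityMeasure P]
    (m₁ m₂ Ω₁ Ω₂ m₀ Ω₀ : ℝ) (hm₂ : 0 < m₂) (hm₁₂ : m₂ < m₁) (hΩ₁ : 0 < Ω₁) (hΩ₂ : 0 < Ω₂)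
    (hm₀ : 0 < m₀) (hΩ₀ : 0 < Ω₀)
    (N : ℕ) (hN : 0 < N)
    (X₀ : E → ℝ) (X₁ X₂ : Fin N → E → ℝ)
    (hX₀ : Measurable X₀)
    (hX₁ : ∀ n, Measurable (X₁ n)) (hX₂ : ∀ n, Measurable (X₂ n))
    (hNak₀ : IsNakagami P X₀ m₀ Ω₀)
    (hNak₁ : ∀ n, IsNakagami P (X₁ n) m₁ Ω₁) (hNak₂ : ∀ n, IsNakagami P (X₂ n) m₂ Ω₂)
    (hIndep : iIndepFun
      (fun o : Option (Fin N ⊕ Fin N) => o.elim X₀ (Sum.elim X₁ X₂)) P)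
    (C : ℝ) (hC : C = 2 * (Real.Gamma (2 * m₂) / Real.Gamma m₂) *
      (Real.Gamma (m₁ - m₂) / Real.Gamma m₁) * (Ω₁ * Ω₂) ^ m₂)
    (s : ℝ) (hs : 0 < s) :
    ∫ ω, Real.exp (-s * (X₀ ω + ∑ n, X₁ n ω * X₂ n ω)) ∂P ≤
      2 * (Real.Gamma (2 * m₀) / Real.Gamma m₀) * Ω₀ ^ m₀ * C ^ N *
        s ^ (-(2 * (m₀ + N * m₂))) :=
  irs_direct_link_mgf_upper_bound_general P m₁ m₂ Ω₁ Ω₂ m₀ Ω₀ hm₂ hm₁₂ hΩ₁ hΩ₂ hm₀ hΩ₀ N X₀ X₁ X₂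
    hX₀ hX₁ hX₂ hNak₀ hNak₁ hNak₂ hIndep C hC s hs
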